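/- arXiv:2201.13329 — 3 statements merged into one kernel-verified Lean document; each statement's English description precedes it below -/
import Mathlib

section
/- Consider the Gaussian mixture data model where y is uniform on {-1,+1}, x_1 ~ N(y, σ²), and x_2,...,x_{d+1} are i.i.d. N(ηy, σ²) with 0 < η. Let the robust classifier be f_rob(x) = sign(x_1). Under ℓ∞ perturbations of magnitude ε = 2η, the adversarial accuracy of f_rob equals Pr[N(0,1) < (1 - 2η)/σ]. -/
open MeasureTheory ProbabilityTheory ENNReal

/-- The Gaussian mixture distribution over (ℝ^{d+1}) × {±1}: labels ±1 with probability 1/2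
each; given y, the coordinates are independent with x_i ~ N(μ_i y, σ²). -/
noncomputable def gmix (d : ℕ) (μ : Fin (d + 1) → ℝ) (σ : ℝ) :
    Measure ((Fin (d + 1) → ℝ) × ℝ) :=
  (1 / 2 : ℝ≥0∞) • Measure.map (fun x => (x, (1 : ℝ)))
      (Measure.pi fun i => gaussianReal (μ i) (σ ^ 2).toNNReal)
  + (1 / 2 : ℝ≥0∞) • Measure.map (fun x => (x, (-1 : ℝ)))
      (Measure.pi fun i => gaussianReal (-μ i) (σ ^ 2).toNNReal)

/-- Adversarial accuracy of a classifier f under ℓ∞ perturbations of magnitude ε. -/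
noncomputable def advAcc (d : ℕ) (D : Measure ((Fin (d + 1) → ℝ) × ℝ))
    (f : (Fin (d + 1) → ℝ) → ℝ) (ε : ℝ) : ℝ≥0∞ :=
  D {p | ∀ δ : Fin (d + 1) → ℝ, (∀ i, |δ i| ≤ ε) → f (p.1 + δ) = p.2}

/-! A perturbation of ℓ∞-size `2η` moves `x₁` by at most `2η`, so `sign x₁` is robustly correct
exactly when `x₁` lies beyond `2η` on the side of the label `y`. Given `y = ±1` we have
`x₁ ~ N(±1, σ²)`, and standardizing shows that both events have probability
`Pr[N(0,1) < (1 - 2η)/σ]`, the boundary `x₁ = ∓2η` being null. -/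

open Set

namespace ProbabilityTheory

lemma gaussianReal_eq_map_const_add_mul (m σ : ℝ) :
    gaussianReal m (σ ^ 2).toNNReal = (gaussianReal 0 1).map (fun z => m + σ * z) := by
  calc gaussianReal m (σ ^ 2).toNNReal
      = ((gaussianReal 0 1).map (σ * ·)).map (m + ·) := by
        rw [gaussianReal_map_const_mul, gaussianReal_map_const_add, mul_zero, zero_add, mul_one]
        congr
        exact Real.toNNReal_of_nonneg (sq_nonneg σ)
    _ = (gaussianReal 0 1).map (fun z => m + σ * z) := Measure.map_map (by fun_prop) (by fun_prop)

lemma gaussianReal_Ioi_eq {σ : ℝ} (hσ : 0 < σ) (m c : ℝ) :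
    gaussianReal m (σ ^ 2).toNNReal (Ioi c) = gaussianReal 0 1 (Iio ((m - c) / σ)) := by
  -- standardize with the scale `-σ`, which turns the upper tail into a lower one
  rw [← neg_sq, gaussianReal_eq_map_const_add_mul,
    Measure.map_apply (by fun_prop) measurableSet_Ioi]
  congr 1
  ext z
  simp only [mem_preimage, mem_Ioi, mem_Iio, lt_div_iff₀ hσ]
  constructor <;> intro h <;> linarith

lemma gaussianReal_Iic_eq {σ : ℝ} (hσ : 0 < σ) (m c : ℝ) :
    gaussianReal m (σ ^ 2).toNNReal (Iic c) = gaussianReal 0 1 (Iio ((c - m) / σ)) := by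
  have : NullSingletonClass (gaussianReal 0 1) := nullSingletonClass_gaussianReal one_ne_zero
  rw [gaussianReal_eq_map_const_add_mul, Measure.map_apply (by fun_prop) measurableSet_Iic,
    measure_congr Iio_ae_eq_Iic]
  congr 1
  ext z
  simp only [mem_preimage, mem_Iic, le_div_iff₀ hσ]
  constructor <;> intro h <;> linarith

end ProbabilityTheory

lemma gmix_apply_labelled_coord {d : ℕ} (μ : Fin (d + 1) → ℝ) (σ : ℝ) (i : Fin (d + 1))
    {s t : Set ℝ} (hs : MeasurableSet s) (ht : MeasurableSet t) :
    gmix d μ σ {p | (p.1 i ∈ s ∧ p.2 = 1) ∨ (p.1 i ∈ t ∧ p.2 = -1)}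
      = 1 / 2 * gaussianReal (μ i) (σ ^ 2).toNNReal s
        + 1 / 2 * gaussianReal (-μ i) (σ ^ 2).toNNReal t := by
  have hmeas : MeasurableSet {p : (Fin (d + 1) → ℝ) × ℝ |
      (p.1 i ∈ s ∧ p.2 = 1) ∨ (p.1 i ∈ t ∧ p.2 = -1)} := by
    refine (((measurable_pi_apply i).comp measurable_fst) hs |>.inter ?_).union
      ((((measurable_pi_apply i).comp measurable_fst) ht).inter ?_)
    · exact measurable_snd (measurableSet_singleton 1)
    · exact measurable_snd (measurableSet_singleton (-1))
  have h_pos : (fun x : Fin (d + 1) → ℝ => (x, (1 : ℝ))) ⁻¹'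
      {p | (p.1 i ∈ s ∧ p.2 = 1) ∨ (p.1 i ∈ t ∧ p.2 = -1)} = Function.eval i ⁻¹' s := by
    ext x; norm_num
  have h_neg : (fun x : Fin (d + 1) → ℝ => (x, (-1 : ℝ))) ⁻¹'
      {p | (p.1 i ∈ s ∧ p.2 = 1) ∨ (p.1 i ∈ t ∧ p.2 = -1)} = Function.eval i ⁻¹' t := by
    ext x; norm_num
  rw [gmix, Measure.add_apply, Measure.smul_apply, Measure.smul_apply,
    Measure.map_apply measurable_prodMk_right hmeas, h_pos,
    Measure.map_apply measurable_prodMk_right hmeas, h_neg,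
    (measurePreserving_eval _ i).measure_preimage hs.nullMeasurableSet,
    (measurePreserving_eval _ i).measure_preimage ht.nullMeasurableSet, smul_eq_mul, smul_eq_mul]

lemma forall_sign_add_eq_iff {ι : Type*} (i : ι) {ε : ℝ} (hε : 0 ≤ ε) (x : ι → ℝ) (y : ℝ) :
    (∀ δ : ι → ℝ, (∀ j, |δ j| ≤ ε) → (if 0 < (x + δ) i then (1 : ℝ) else -1) = y)
      ↔ (x i ∈ Ioi ε ∧ y = 1) ∨ (x i ∈ Iic (-ε) ∧ y = -1) := by
  have h_adm : ∀ c : ℝ, |c| ≤ ε → ∀ j : ι, |(fun _ => c : ι → ℝ) j| ≤ ε := fun _ hc _ => hc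
  simp only [Pi.add_apply, mem_Ioi, mem_Iic]
  constructor
  · -- the constant perturbations `±ε` push `x i` furthest towards either side
    intro h
    have h_down := h _ (h_adm (-ε) (by rw [abs_neg, abs_of_nonneg hε]))
    have h_up := h _ (h_adm ε (abs_of_nonneg hε).le)
    by_cases hx : ε < x i
    · rw [if_pos (by linarith)] at h_down
      exact Or.inl ⟨hx, h_down.symm⟩
    · rw [if_neg (by linarith)] at h_down
      by_cases hx' : x i ≤ -ε
      · exact Or.inr ⟨hx', h_down.symm⟩
      · rw [if_pos (by linarith), ← h_down] at h_up
        norm_num at h_up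
  · rintro (⟨hx, rfl⟩ | ⟨hx, rfl⟩) δ hδ
    · rw [if_pos (by linarith [(abs_le.mp (hδ i)).1])]
    · rw [if_neg (by linarith [(abs_le.mp (hδ i)).2])]

/-- In the Gaussian mixture model (x_1 ~ N(y,σ²), x_i ~ N(ηy,σ²) for i ≥ 2), the adversarial
accuracy of the robust classifier f_rob(x) = sign(x_1) under ℓ∞ budget ε = 2η equals
Pr[N(0,1) < (1 - 2η)/σ]. -/
theorem advAcc_robust_classifier (d : ℕ) (η σ : ℝ) (hη : 0 < η) (hσ : 0 < σ) :
    advAcc d (gmix d (fun i => if i = 0 then 1 else η) σ)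
        (fun x => if 0 < x 0 then (1 : ℝ) else -1) (2 * η)
      = gaussianReal 0 1 {t : ℝ | t < (1 - 2 * η) / σ} := by
  simp only [advAcc, forall_sign_add_eq_iff (0 : Fin (d + 1)) (by positivity : (0 : ℝ) ≤ 2 * η)]
  rw [gmix_apply_labelled_coord _ _ _ measurableSet_Ioi measurableSet_Iic, if_pos rfl,
    gaussianReal_Ioi_eq hσ, gaussianReal_Iic_eq hσ, show -(2 * η) - -1 = 1 - 2 * η by ring,
    ← add_mul, ENNReal.add_halves, one_mul]
  rfl
end

section
/- Consider the Gaussian mixture data model where y is uniform on {-1,+1}, x_1 ~ N(y, σ²), and x_2,...,x_{d+1} are i.i.d. N(ηy, σ²). Let f_nat(x) = sign(w_nat · x) with w_nat = (1, η, ..., η). Under ℓ∞ perturbations of magnitude ε = 2η, the adversarial accuracy of f_nat is at most Pr[N(0,1) < (1 - dη²)/(σ√(1 + dη²))]. In particular, if d ≥ 1/η², the adversarial accuracy of f_nat is less than 1/2. -/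
/-!
The constant perturbation `δ = -ε y` lowers the margin `y (w · x)` of the linear classifier
`sign (w · x)` by `ε ∑ wᵢ`, so a point is robustly classified only if its margin is at least
`ε ∑ wᵢ`. For the natural classifier `w = μ` the margin is, under either class of the mixture,
a Gaussian with mean `‖μ‖²` and variance `σ² ‖μ‖²`, so the robust accuracy is at most
`Φ ((‖μ‖² - ε ∑ μᵢ) / (σ ‖μ‖))`. With `μ = (1, η, …, η)` and `ε = 2η` the argument of `Φ` is
`(1 - dη² - 2η) / (σ √(1 + dη²))`, which is negative as soon as `dη² ≥ 1`.
-/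

open MeasureTheory ProbabilityTheory ENNReal

open NNReal

section Gaussian

variable {ι : Type*} [Fintype ι]

theorem map_sum_pi_gaussianReal (m : ι → ℝ) (v : ι → ℝ≥0) :
    (Measure.pi fun i => gaussianReal (m i) (v i)).map (fun x => ∑ i, x i)
      = gaussianReal (∑ i, m i) (∑ i, v i) := by
  refine Measure.ext_of_charFun ?_
  rw [charFun_map_sum_pi_eq_prod]
  ext t
  simp only [Finset.prod_apply, charFun_gaussianReal, ← Complex.exp_sum]
  push_cast
  rw [Finset.sum_sub_distrib, ← Finset.sum_mul, ← Finset.mul_sum, ← Finset.sum_div,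
    ← Finset.sum_mul]

theorem map_sum_mul_pi_gaussianReal (w m : ι → ℝ) (v : ι → ℝ≥0) :
    (Measure.pi fun i => gaussianReal (m i) (v i)).map (fun x => ∑ i, w i * x i)
      = gaussianReal (∑ i, w i * m i) (∑ i, (w i ^ 2).toNNReal * v i) := by
  have hscale : (Measure.pi fun i => gaussianReal (m i) (v i)).map (fun x i => w i * x i)
      = Measure.pi fun i => gaussianReal (w i * m i) ((w i ^ 2).toNNReal * v i) := by
    rw [Measure.pi_map_pi fun i => by fun_prop]
    simp_rw [gaussianReal_map_const_mul, Real.toNNReal_of_nonneg (sq_nonneg _)]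
  rw [← map_sum_pi_gaussianReal, ← hscale, Measure.map_map (by fun_prop) (by fun_prop)]
  rfl

end Gaussian

theorem gaussianReal_Ici (m a : ℝ) {v : ℝ≥0} (hv : v ≠ 0) :
    gaussianReal m v (Set.Ici a) = gaussianReal 0 1 (Set.Iic ((m - a) / √v)) := by
  have hstd : (gaussianReal 0 1).map (fun z => m - √v * z) = gaussianReal m v := by
    change (gaussianReal 0 1).map ((m - ·) ∘ (√v * ·)) = _
    rw [← Measure.map_map (by fun_prop) (by fun_prop), gaussianReal_map_const_mul,
      gaussianReal_map_const_sub]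
    congr 1
    · ring
    · ext; simp
  have hsv : 0 < √(v : ℝ) := Real.sqrt_pos.2 (by positivity)
  rw [← hstd, Measure.map_apply (by fun_prop) measurableSet_Ici]
  congr 1
  ext z
  simp only [Set.mem_preimage, Set.mem_Ici, Set.mem_Iic, le_div_iff₀ hsv]
  constructor <;> intro <;> linarith

theorem gaussianReal_Iic_lt_half {c : ℝ} (hc : c < 0) :
    gaussianReal 0 1 (Set.Iic c) < 1 / 2 := by
  have hsymm : gaussianReal 0 1 (Set.Ici (-c)) = gaussianReal 0 1 (Set.Iic c) := by
    rw [gaussianReal_Ici 0 _ one_ne_zero]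
    simp
  have hgap : 0 < gaussianReal 0 1 (Set.Ioo c (-c)) := by
    refine pos_iff_ne_zero.2 fun h => ?_
    have := gaussianReal_absolutelyContinuous' 0 one_ne_zero h
    simp only [Real.volume_Ioo, ENNReal.ofReal_eq_zero] at this
    linarith
  have htotal : gaussianReal 0 1 (Set.Iic c) + gaussianReal 0 1 (Set.Ioo c (-c))
      + gaussianReal 0 1 (Set.Ici (-c)) = 1 := by
    rw [← measure_union ((Set.Iic_disjoint_Ioi le_rfl).mono_right Set.Ioo_subset_Ioi_self)
        measurableSet_Ioo, Set.Iic_union_Ioo_eq_Iio (by linarith), ← Set.compl_Iio,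
      measure_add_measure_compl measurableSet_Iio, measure_univ]
  rw [hsymm, add_right_comm, ← two_mul] at htotal
  rw [ENNReal.lt_div_iff_mul_lt (by simp) (by simp), mul_comm, ← htotal]
  exact ENNReal.lt_add_right (by finiteness) hgap.ne'

theorem le_mul_sum_mul_of_robust {ι : Type*} [Fintype ι] {w x : ι → ℝ} {y ε : ℝ}
    (hε : 0 ≤ ε)
    (h : ∀ δ : ι → ℝ, (∀ i, |δ i| ≤ ε) →
      (if 0 < ∑ i, w i * (x + δ) i then (1 : ℝ) else -1) = y) :
    ε * ∑ i, w i ≤ y * ∑ i, w i * x i := by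
  have hshift (c : ℝ) :
      ∑ i, w i * (x + fun _ => c : ι → ℝ) i = ∑ i, w i * x i + c * ∑ i, w i := by
    rw [Finset.mul_sum]
    simp only [Pi.add_apply, mul_add, Finset.sum_add_distrib, mul_comm c]
  have hdown := h (fun _ => -ε) fun _ => by rw [abs_neg, abs_of_nonneg hε]
  have hup := h (fun _ => ε) fun _ => by rw [abs_of_nonneg hε]
  rw [hshift] at hdown hup
  split_ifs at hdown hup <;> subst y <;> linarith

theorem advAcc_sign_le_margin (d : ℕ) (D : Measure ((Fin (d + 1) → ℝ) × ℝ)) (w : Fin (d + 1) → ℝ)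
    {ε : ℝ} (hε : 0 ≤ ε) :
    advAcc d D (fun x => if 0 < ∑ i, w i * x i then (1 : ℝ) else -1) ε
      ≤ D {p | ε * ∑ i, w i ≤ p.2 * ∑ i, w i * p.1 i} :=
  measure_mono fun _ hp => le_mul_sum_mul_of_robust hε hp

theorem gmix_apply_le_margin (d : ℕ) (μ : Fin (d + 1) → ℝ) (σ a : ℝ) :
    gmix d μ σ {p : (Fin (d + 1) → ℝ) × ℝ | a ≤ p.2 * ∑ i, μ i * p.1 i}
      = gaussianReal (∑ i, μ i * μ i)
          (∑ i, (μ i ^ 2).toNNReal * (σ ^ 2).toNNReal) (Set.Ici a) := by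
  set E : Set ((Fin (d + 1) → ℝ) × ℝ) := {p | a ≤ p.2 * ∑ i, μ i * p.1 i}
  have hmeas : MeasurableSet E := measurableSet_le measurable_const (by fun_prop)
  have hpos : (fun x => (x, (1 : ℝ))) ⁻¹' E = (fun x => ∑ i, μ i * x i) ⁻¹' Set.Ici a := by
    ext; simp [E]
  have hneg : (fun x => (x, (-1 : ℝ))) ⁻¹' E = (fun x => ∑ i, -μ i * x i) ⁻¹' Set.Ici a := by
    ext; simp [E, neg_mul, Finset.sum_neg_distrib]
  rw [gmix, Measure.add_apply, Measure.smul_apply, Measure.smul_apply,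
    Measure.map_apply measurable_prodMk_right hmeas,
    Measure.map_apply measurable_prodMk_right hmeas, hpos, hneg, ← Measure.map_apply (by fun_prop) measurableSet_Ici,
    ← Measure.map_apply (by fun_prop) measurableSet_Ici, map_sum_mul_pi_gaussianReal,
    map_sum_mul_pi_gaussianReal]
  simp only [neg_mul_neg, neg_sq, smul_eq_mul, ← add_mul, ENNReal.add_halves, one_mul]

theorem advAcc_gmix_natural_le (d : ℕ) (μ : Fin (d + 1) → ℝ) (hμ : μ ≠ 0) {σ ε : ℝ}
    (hσ : 0 < σ) (hε : 0 ≤ ε) :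
    advAcc d (gmix d μ σ) (fun x => if 0 < ∑ i, μ i * x i then (1 : ℝ) else -1) ε
      ≤ gaussianReal 0 1
          (Set.Iic ((∑ i, μ i ^ 2 - ε * ∑ i, μ i) / (σ * √(∑ i, μ i ^ 2)))) := by
  set V : ℝ≥0 := ∑ i, (μ i ^ 2).toNNReal * (σ ^ 2).toNNReal
  have hnorm : 0 < ∑ i, μ i ^ 2 := by
    obtain ⟨j, hj⟩ := Function.ne_iff.1 hμ
    exact Finset.sum_pos' (fun i _ => sq_nonneg _) ⟨j, Finset.mem_univ _, sq_pos_of_ne_zero hj⟩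
  have hV : (V : ℝ) = (∑ i, μ i ^ 2) * σ ^ 2 := by
    rw [NNReal.coe_sum, Finset.sum_mul]
    refine Finset.sum_congr rfl fun i _ => ?_
    rw [NNReal.coe_mul, Real.coe_toNNReal _ (sq_nonneg _), Real.coe_toNNReal _ (sq_nonneg σ)]
  have hV0 : V ≠ 0 := by
    rw [← NNReal.coe_ne_zero, hV]
    positivity
  have hsqrtV : √(V : ℝ) = σ * √(∑ i, μ i ^ 2) := by
    rw [hV, Real.sqrt_mul' _ (sq_nonneg σ), Real.sqrt_sq hσ.le, mul_comm]
  calc advAcc d (gmix d μ σ) (fun x => if 0 < ∑ i, μ i * x i then (1 : ℝ) else -1) ε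
      ≤ gmix d μ σ {p | ε * ∑ i, μ i ≤ p.2 * ∑ i, μ i * p.1 i} := advAcc_sign_le_margin d _ μ hε
    _ = gaussianReal (∑ i, μ i * μ i) V (Set.Ici (ε * ∑ i, μ i)) := gmix_apply_le_margin d μ σ _
    _ = _ := by simp only [gaussianReal_Ici _ _ hV0, hsqrtV, ← sq]

/-- In the Gaussian mixture model, under ℓ∞ budget ε = 2η, the adversarial accuracy of the
natural classifier f_nat(x) = sign(x_1 + η ∑_{i≥2} x_i) is at most
Pr[N(0,1) < (1 - dη²)/(σ√(1 + dη²))]; in particular it is below 1/2 when d ≥ 1/η². -/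
theorem advAcc_natural_classifier_le (d : ℕ) (η σ : ℝ) (hη : 0 < η) (hσ : 0 < σ) :
    advAcc d (gmix d (fun i => if i = 0 then 1 else η) σ)
        (fun x => if 0 < ∑ i, (if i = 0 then 1 else η) * x i then (1 : ℝ) else -1) (2 * η)
      ≤ gaussianReal 0 1
          {t : ℝ | t < (1 - d * η ^ 2) / (σ * Real.sqrt (1 + d * η ^ 2))}
    ∧ ((1 / η ^ 2 ≤ (d : ℝ)) →
        advAcc d (gmix d (fun i => if i = 0 then 1 else η) σ)
            (fun x => if 0 < ∑ i, (if i = 0 then 1 else η) * x i then (1 : ℝ) else -1) (2 * η)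
          < 1 / 2) := by
  have hμ : (fun i : Fin (d + 1) => if i = 0 then (1 : ℝ) else η) ≠ 0 :=
    fun h => by simpa using congr_fun h 0
  have hsum : ∑ i : Fin (d + 1), (if i = 0 then (1 : ℝ) else η) = 1 + d * η := by
    simp [Fin.sum_univ_succ]
  have hsq : ∑ i : Fin (d + 1), (if i = 0 then (1 : ℝ) else η) ^ 2 = 1 + d * η ^ 2 := by
    simp [Fin.sum_univ_succ]
  have hbound := advAcc_gmix_natural_le d _ hμ hσ (by positivity : 0 ≤ 2 * η)
  rw [hsum, hsq] at hbound
  set s := σ * √(1 + d * η ^ 2)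
  have hs : 0 < s := by positivity
  have hshift : (1 + d * η ^ 2 - 2 * η * (1 + d * η)) / s = (1 - d * η ^ 2) / s - 2 * η / s := by
    ring
  have hgap : 0 < 2 * η / s := by positivity
  rw [hshift] at hbound
  refine ⟨hbound.trans (measure_mono fun t (ht : t ≤ _) => show t < _ by linarith), fun hd => ?_⟩
  have hdη : 1 ≤ d * η ^ 2 := by rwa [div_le_iff₀ (by positivity)] at hd
  have hc : (1 - d * η ^ 2) / s ≤ 0 := div_nonpos_of_nonpos_of_nonneg (by linarith) hs.le
  exact hbound.trans_lt (gaussianReal_Iic_lt_half (by linarith))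
end

section
/- Let the training distribution T_hyp be: y uniform on {±1}, x_1 ~ N((1+ε)y, σ²), x_i ~ N((η+ε)y, σ²) i.i.d. for i = 2,...,d+1, with ε > 0, η > 0. Then any linear classifier minimizing the ℓ∞ adversarial 0-1 risk with defense budget ε on T_hyp has all weights positive (w_i > 0 for all i ≥ 1), and the minimizer is equivalent to the natural classifier f_nat(x) = sign(x_1 + η∑_{i≥2} x_i). -/
open MeasureTheory ProbabilityTheory ENNReal

/-- The ℓ∞ adversarial 0-1 risk of the linear classifier sign(w·x + b) with budget ε. -/
noncomputable def advRisk (d : ℕ) (D : Measure ((Fin (d + 1) → ℝ) × ℝ))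
    (w : Fin (d + 1) → ℝ) (b ε : ℝ) : ℝ≥0∞ :=
  D {p | ∃ δ : Fin (d + 1) → ℝ, (∀ i, |δ i| ≤ ε) ∧
    (if 0 < (∑ i, w i * (p.1 i + δ i)) + b then (1 : ℝ) else -1) ≠ p.2}

/-!
Under each class of the mixture the score `w ⬝ x` is Gaussian with mean `±w ⬝ μ` and standard
deviation `σ‖w‖₂`, and the worst ℓ∞ perturbation shifts it by `ε‖w‖₁` against the label. So the
risk of `(w, b)` is `(Φ (-c - β) + Φ (-c + β)) / 2` with `c = (w ⬝ μ - ε‖w‖₁) / (σ‖w‖₂)` and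
`β = b / (σ‖w‖₂)`. For means `μ = ν + ε` with `ν ≥ 0`, `∑ wᵢ ≤ ‖w‖₁` and Cauchy–Schwarz give
`c ≤ ‖ν‖₂ / σ`, which the natural classifier attains with `β = 0`. Since the Gaussian density
decreases away from `0`, `β ↦ Φ (-a - β) + Φ (-a + β)` has a strict minimum at `β = 0` when
`a > 0`; so a classifier at least as good as the natural one has `b = 0` and is an equality case
of Cauchy–Schwarz, i.e. a positive multiple of `ν`.
-/

open Set Real
open scoped NNReal

local notation "Φ" => cdf (gaussianReal 0 1)

theorem map_pi_gaussianReal_sum_mul {ι : Type*} [Fintype ι] (w μ : ι → ℝ) (v : ℝ≥0) :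
    (Measure.pi fun i => gaussianReal (μ i) v).map (fun x => ∑ i, w i * x i)
      = gaussianReal (∑ i, w i * μ i) (∑ i, w i ^ 2 * (v : ℝ)).toNNReal := by
  set P := Measure.pi fun i => gaussianReal (μ i) v
  have hlaw (i : ι) : HasLaw (fun x : ι → ℝ => w i * x i)
      (gaussianReal (w i * μ i) (⟨w i ^ 2, sq_nonneg _⟩ * v)) P :=
    gaussianReal_const_mul ⟨(measurable_pi_apply i).aemeasurable,
      (measurePreserving_eval _ i).map_eq⟩ (w i)
  have hindep : iIndepFun (fun i (x : ι → ℝ) => w i * x i) P :=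
    iIndepFun_pi (X := fun i t => w i * t) fun i => by fun_prop
  rw [(hindep.hasGaussianLaw_fun_sum fun i => (hlaw i).hasGaussianLaw).map_eq_gaussianReal]
  congr 2
  · rw [integral_finsetSum _ fun i _ => (hlaw i).hasGaussianLaw.integrable]
    exact Finset.sum_congr rfl fun i _ => by rw [(hlaw i).integral_eq, integral_id_gaussianReal]
  · rw [← Finset.sum_fn, variance_sum_pi (X := fun i t => w i * t) fun i => ?_]
    · refine Finset.sum_congr rfl fun i _ => ?_
      rw [variance_const_mul, variance_fun_id_gaussianReal]
    · exact (memLp_id_gaussianReal 2).const_mul (w i)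

theorem gaussianPDFReal_lt_gaussianPDFReal {μ : ℝ} {v : ℝ≥0} (hv : v ≠ 0) {x y : ℝ}
    (h : (x - μ) ^ 2 < (y - μ) ^ 2) : gaussianPDFReal μ v y < gaussianPDFReal μ v x := by
  have hv' : (0 : ℝ) < v := by positivity
  simp only [gaussianPDFReal_def]
  gcongr

theorem cdf_gaussianReal_sub_cdf {t u : ℝ} (h : t ≤ u) :
    Φ u - Φ t = ∫ x in t..u, gaussianPDFReal 0 1 x := by
  have hmeas := (cdf (gaussianReal 0 1)).measure_Ioc t u
  rw [measure_cdf, gaussianReal_apply_eq_integral 0 one_ne_zero,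
    ← intervalIntegral.integral_of_le h] at hmeas
  exact ((ENNReal.ofReal_eq_ofReal_iff (intervalIntegral.integral_nonneg h
    fun x _ => gaussianPDFReal_nonneg 0 1 x) (sub_nonneg.2 (monotone_cdf _ h))).1 hmeas).symm

theorem strictMono_cdf_gaussianReal : StrictMono Φ := fun t u h => by
  rw [← sub_pos, cdf_gaussianReal_sub_cdf h.le]
  exact intervalIntegral.intervalIntegral_pos_of_pos_on
    (integrable_gaussianPDFReal 0 1).intervalIntegrable
    (fun x _ => gaussianPDFReal_pos 0 1 x one_ne_zero) h

theorem cdf_gaussianReal_neg (t : ℝ) : Φ (-t) = 1 - Φ t := by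
  have := nullSingletonClass_gaussianReal (μ := 0) one_ne_zero
  have hsymm : (gaussianReal 0 1).map (fun x => -x) = gaussianReal 0 1 := by
    simpa using gaussianReal_map_neg (μ := 0) (v := 1)
  rw [cdf_eq_real, cdf_eq_real, ← hsymm, map_measureReal_apply measurable_neg measurableSet_Iic,
    hsymm, ← measureReal_congr Iio_ae_eq_Iic, ← probReal_compl_eq_one_sub measurableSet_Iio]
  congr 1
  ext x
  simp

theorem cdf_gaussianReal_zero : Φ 0 = 1 / 2 := by
  linarith [neg_zero (G := ℝ) ▸ cdf_gaussianReal_neg 0]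

theorem cdf_gaussianReal_sub_lt_sub {a β : ℝ} (ha : 0 < a) (hβ : 0 < β) :
    Φ (-a) - Φ (-a - β) < Φ (-a + β) - Φ (-a) := by
  rw [cdf_gaussianReal_sub_cdf (by linarith), cdf_gaussianReal_sub_cdf (by linarith)]
  -- the reflection `y ↦ -2a - y` in `-a` moves `[-a - β, -a]` closer to the origin
  have hrefl : ∫ x in -a..-a + β, gaussianPDFReal 0 1 x
      = ∫ y in -a - β..-a, gaussianPDFReal 0 1 (-2 * a - y) := by
    rw [intervalIntegral.integral_comp_sub_left]; ring_nf
  have hint := integrable_gaussianPDFReal 0 1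
  rw [hrefl, ← sub_pos, ← intervalIntegral.integral_sub
    (hint.comp_sub_left (-2 * a)).intervalIntegrable hint.intervalIntegrable]
  refine intervalIntegral.intervalIntegral_pos_of_pos_on
    ((hint.comp_sub_left _).sub hint).intervalIntegrable (fun y hy => ?_) (by linarith)
  exact sub_pos.2 (gaussianPDFReal_lt_gaussianPDFReal one_ne_zero (by nlinarith [hy.2]))

theorem two_mul_cdf_gaussianReal_lt {a β : ℝ} (ha : 0 < a) (hβ : β ≠ 0) :
    2 * Φ (-a) < Φ (-a - β) + Φ (-a + β) := by
  rcases hβ.lt_or_gt with hβ | hβ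
  · have := cdf_gaussianReal_sub_lt_sub ha (neg_pos.2 hβ)
    rw [sub_neg_eq_add, ← sub_eq_add_neg] at this
    linarith
  · linarith [cdf_gaussianReal_sub_lt_sub ha hβ]

theorem eq_and_eq_zero_of_cdf_add_cdf_le {a c β : ℝ} (ha : 0 < a) (hc : c ≤ a)
    (h : (Φ (-c - β) + Φ (-c + β)) / 2 ≤ Φ (-a)) : c = a ∧ β = 0 := by
  have hmono := monotone_cdf (gaussianReal 0 1)
  have h₁ : Φ (-a - β) ≤ Φ (-c - β) := hmono (by linarith)
  have h₂ : Φ (-a + β) ≤ Φ (-c + β) := hmono (by linarith)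
  obtain rfl : β = 0 := by
    by_contra hβ
    linarith [two_mul_cdf_gaussianReal_lt ha hβ]
  simp only [sub_zero, add_zero] at h
  exact ⟨le_antisymm hc (neg_le_neg_iff.1 (strictMono_cdf_gaussianReal.le_iff_le.1 (by linarith))),
    rfl⟩

theorem gaussianReal_Iic_eq_ofReal_cdf {m s : ℝ} (hs : 0 < s) (t : ℝ) :
    gaussianReal m (s ^ 2).toNNReal (Iic t) = ENNReal.ofReal (Φ ((t - m) / s)) := by
  have hlaw := gaussianReal_add_const
    (gaussianReal_const_mul (HasLaw.id (μ := gaussianReal 0 1)) s) m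
  rw [mul_zero, zero_add, mul_one] at hlaw
  rw [Real.toNNReal_of_nonneg (sq_nonneg s), ofReal_cdf, ← hlaw.map_eq,
    Measure.map_apply (by fun_prop) measurableSet_Iic]
  congr 1
  ext z
  simp [le_div_iff₀ hs, le_sub_iff_add_le, mul_comm]

theorem gaussianReal_Ioi_eq_ofReal_cdf {m s : ℝ} (hs : 0 < s) (t : ℝ) :
    gaussianReal m (s ^ 2).toNNReal (Ioi t) = ENNReal.ofReal (Φ ((m - t) / s)) := by
  rw [← compl_Iic, prob_compl_eq_one_sub measurableSet_Iic, gaussianReal_Iic_eq_ofReal_cdf hs,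
    ← ENNReal.ofReal_one, ← ENNReal.ofReal_sub _ (cdf_nonneg _ _), ← cdf_gaussianReal_neg]
  congr 2
  ring

section CauchySchwarz

variable {ι : Type*} [Fintype ι]

theorem norm_toLp_two (w : ι → ℝ) : ‖WithLp.toLp 2 w‖ = √(∑ i, w i ^ 2) := by
  simp [EuclideanSpace.norm_eq]

theorem sqrt_sum_sq_pos {w : ι → ℝ} (hw : w ≠ 0) : 0 < √(∑ i, w i ^ 2) := by
  rw [← norm_toLp_two]
  exact norm_pos_iff.2 (by simpa using hw)

theorem exists_pos_smul_of_sqrt_mul_sqrt_le {w ν : ι → ℝ} (hw : w ≠ 0) (hν : ν ≠ 0)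
    (h : √(∑ i, w i ^ 2) * √(∑ i, ν i ^ 2) ≤ ∑ i, w i * ν i) :
    ∃ c : ℝ, 0 < c ∧ w = c • ν := by
  set W := WithLp.toLp 2 w
  set N := WithLp.toLp 2 ν
  have hinner : inner ℝ W N = ∑ i, w i * ν i := by simp [W, N, PiLp.inner_apply, mul_comm]
  have hN : 0 < ‖N‖ := by simpa [N, norm_toLp_two] using sqrt_sum_sq_pos hν
  rw [← norm_toLp_two, ← norm_toLp_two, ← hinner] at h
  have hsmul := inner_eq_norm_mul_iff_real.1 (le_antisymm (real_inner_le_norm _ _) h)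
  refine ⟨‖W‖ / ‖N‖, div_pos (by simpa [W, norm_toLp_two] using sqrt_sum_sq_pos hw) hN, ?_⟩
  have := congrArg WithLp.ofLp hsmul
  simp only [WithLp.ofLp_smul] at this
  rw [div_eq_inv_mul, mul_smul, ← this, smul_smul, inv_mul_cancel₀ hN.ne', one_smul]

end CauchySchwarz

section Perturbation

variable {ι : Type*} [Fintype ι] (w : ι → ℝ) {ε : ℝ}

theorem abs_sum_mul_le_of_abs_le {δ : ι → ℝ} (hδ : ∀ i, |δ i| ≤ ε) :
    |∑ i, w i * δ i| ≤ ε * ∑ i, |w i| := by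
  rw [Finset.mul_sum]
  refine (Finset.abs_sum_le_sum_abs _ _).trans (Finset.sum_le_sum fun i _ => ?_)
  rw [abs_mul, mul_comm]
  exact mul_le_mul_of_nonneg_right (hδ i) (abs_nonneg _)

theorem exists_abs_le_and_sum_mul_eq (hε : 0 ≤ ε) :
    ∃ δ : ι → ℝ, (∀ i, |δ i| ≤ ε) ∧ ∑ i, w i * δ i = ε * ∑ i, |w i| := by
  refine ⟨fun i => ε * SignType.sign (w i), fun i => ?_, ?_⟩
  · rw [abs_mul, abs_of_nonneg hε]
    exact mul_le_of_le_one_right hε (by rcases lt_trichotomy (w i) 0 with h | h | h <;> simp [h])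
  · rw [Finset.mul_sum]
    exact Finset.sum_congr rfl fun i _ => by rw [mul_left_comm, self_mul_sign]

theorem exists_sum_mul_add_le_zero_iff (hε : 0 ≤ ε) (x : ι → ℝ) (b : ℝ) :
    (∃ δ : ι → ℝ, (∀ i, |δ i| ≤ ε) ∧ ∑ i, w i * (x i + δ i) + b ≤ 0)
      ↔ ∑ i, w i * x i ≤ ε * ∑ i, |w i| - b := by
  simp only [mul_add, Finset.sum_add_distrib]
  constructor
  · rintro ⟨δ, hδ, h⟩
    linarith [neg_abs_le (∑ i, w i * δ i), abs_sum_mul_le_of_abs_le w hδ]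
  · intro h
    obtain ⟨δ, hδ, hsum⟩ := exists_abs_le_and_sum_mul_eq w hε
    refine ⟨-δ, fun i => by simpa using hδ i, ?_⟩
    simp only [Pi.neg_apply, mul_neg, Finset.sum_neg_distrib, hsum]
    linarith

theorem exists_pos_sum_mul_add_iff (hε : 0 ≤ ε) (x : ι → ℝ) (b : ℝ) :
    (∃ δ : ι → ℝ, (∀ i, |δ i| ≤ ε) ∧ 0 < ∑ i, w i * (x i + δ i) + b)
      ↔ -(ε * ∑ i, |w i|) - b < ∑ i, w i * x i := by
  simp only [mul_add, Finset.sum_add_distrib]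
  constructor
  · rintro ⟨δ, hδ, h⟩
    linarith [le_abs_self (∑ i, w i * δ i), abs_sum_mul_le_of_abs_le w hδ]
  · intro h
    obtain ⟨δ, hδ, hsum⟩ := exists_abs_le_and_sum_mul_eq w hε
    exact ⟨δ, hδ, by linarith⟩

end Perturbation

section Margin

variable {ι : Type*} [Fintype ι]

theorem sum_mul_add_const_sub_le (w ν : ι → ℝ) {ε : ℝ} (hε : 0 ≤ ε) :
    ∑ i, w i * (ν i + ε) - ε * ∑ i, |w i| ≤ ∑ i, w i * ν i := by
  have : ∑ i, w i ≤ ∑ i, |w i| := Finset.sum_le_sum fun i _ => le_abs_self _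
  simp only [mul_add, Finset.sum_add_distrib, ← Finset.sum_mul]
  nlinarith

theorem sum_mul_add_const_sub_self {ν : ι → ℝ} (hν : ∀ i, 0 ≤ ν i) (ε : ℝ) :
    ∑ i, ν i * (ν i + ε) - ε * ∑ i, |ν i| = ∑ i, ν i ^ 2 := by
  simp only [abs_of_nonneg (hν _), mul_add, Finset.sum_add_distrib, ← Finset.sum_mul, sq]
  ring

end Margin

theorem advRisk_gmix (d : ℕ) (μ w : Fin (d + 1) → ℝ) (b σ : ℝ) {ε : ℝ} (hε : 0 ≤ ε) :
    advRisk d (gmix d μ σ) w b ε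
      = 1 / 2 * gaussianReal (∑ i, w i * μ i) (∑ i, w i ^ 2 * σ ^ 2).toNNReal
          (Iic (ε * ∑ i, |w i| - b))
        + 1 / 2 * gaussianReal (-∑ i, w i * μ i) (∑ i, w i ^ 2 * σ ^ 2).toNNReal
          (Ioi (-(ε * ∑ i, |w i|) - b)) := by
  have hL : Measurable fun x : Fin (d + 1) → ℝ => ∑ i, w i * x i := by fun_prop
  have hlaw (m : Fin (d + 1) → ℝ) :
      (Measure.pi fun i => gaussianReal (m i) (σ ^ 2).toNNReal).map (fun x => ∑ i, w i * x i)
        = gaussianReal (∑ i, w i * m i) (∑ i, w i ^ 2 * σ ^ 2).toNNReal := by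
    rw [map_pi_gaussianReal_sum_mul, Real.coe_toNNReal _ (sq_nonneg σ)]
  have hneg : ∑ i, w i * -μ i = -∑ i, w i * μ i := by simp
  rw [advRisk, gmix, Measure.add_apply, Measure.smul_apply, Measure.smul_apply, smul_eq_mul,
    smul_eq_mul, (measurableEmbedding_prod_mk_right _).map_apply,
    (measurableEmbedding_prod_mk_right _).map_apply, ← hlaw, ← hneg, ← hlaw,
    Measure.map_apply hL measurableSet_Iic, Measure.map_apply hL measurableSet_Ioi]
  congr 3 <;> ext x
  · simpa [not_lt, show (-1 : ℝ) ≠ 1 by norm_num] using exists_sum_mul_add_le_zero_iff w hε x b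
  · simpa [show (1 : ℝ) ≠ -1 by norm_num] using exists_pos_sum_mul_add_iff w hε x b

theorem advRisk_gmix_zero (d : ℕ) (μ : Fin (d + 1) → ℝ) (b σ : ℝ) {ε : ℝ} (hε : 0 ≤ ε) :
    advRisk d (gmix d μ σ) 0 b ε = 1 / 2 := by
  rw [advRisk_gmix d μ 0 b σ hε]
  simp only [Pi.zero_apply, zero_mul, Finset.sum_const_zero, ne_eq, OfNat.ofNat_ne_zero,
    not_false_eq_true, zero_pow, abs_zero, mul_zero, neg_zero, zero_sub, Real.toNNReal_zero,
    gaussianReal_zero_var]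
  rw [← mul_add, ← compl_Iic, measure_add_measure_compl measurableSet_Iic, measure_univ, mul_one]

theorem advRisk_gmix_of_ne_zero {d : ℕ} (μ : Fin (d + 1) → ℝ) {w : Fin (d + 1) → ℝ} (b : ℝ)
    {σ ε : ℝ} (hσ : 0 < σ) (hε : 0 ≤ ε) (hw : w ≠ 0) :
    advRisk d (gmix d μ σ) w b ε = ENNReal.ofReal
      ((Φ ((-(∑ i, w i * μ i - ε * ∑ i, |w i|) - b) / (σ * √(∑ i, w i ^ 2)))
        + Φ ((-(∑ i, w i * μ i - ε * ∑ i, |w i|) + b) / (σ * √(∑ i, w i ^ 2)))) / 2) := by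
  have hs : 0 < σ * √(∑ i, w i ^ 2) := mul_pos hσ (sqrt_sum_sq_pos hw)
  have hvar : ∑ i, w i ^ 2 * σ ^ 2 = (σ * √(∑ i, w i ^ 2)) ^ 2 := by
    rw [mul_pow, sq_sqrt (Finset.sum_nonneg fun i _ => sq_nonneg _), Finset.mul_sum]
    exact Finset.sum_congr rfl fun i _ => mul_comm _ _
  rw [advRisk_gmix d μ w b σ hε, hvar, gaussianReal_Iic_eq_ofReal_cdf hs,
    gaussianReal_Ioi_eq_ofReal_cdf hs, ENNReal.ofReal_div_of_pos two_pos,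
    ENNReal.ofReal_add (cdf_nonneg _ _) (cdf_nonneg _ _), ENNReal.ofReal_ofNat,
    ← mul_add, one_div, ENNReal.div_eq_inv_mul]
  congr 4 <;> ring

theorem exists_pos_smul_and_eq_zero_of_advRisk_le {d : ℕ} {ν w : Fin (d + 1) → ℝ} {b σ ε : ℝ}
    (hν : ∀ i, 0 ≤ ν i) (hν₀ : ν ≠ 0) (hσ : 0 < σ) (hε : 0 ≤ ε)
    (hle : advRisk d (gmix d (fun i => ν i + ε) σ) w b ε
      ≤ advRisk d (gmix d (fun i => ν i + ε) σ) ν 0 ε) :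
    ∃ c : ℝ, 0 < c ∧ w = c • ν ∧ b = 0 := by
  set R := √(∑ i, ν i ^ 2)
  have hR : 0 < R := sqrt_sum_sq_pos hν₀
  have hnat : advRisk d (gmix d (fun i => ν i + ε) σ) ν 0 ε = ENNReal.ofReal (Φ (-(R / σ))) := by
    have hR2 : ∑ i, ν i ^ 2 = R ^ 2 := (sq_sqrt (Finset.sum_nonneg fun i _ => sq_nonneg _)).symm
    rw [advRisk_gmix_of_ne_zero _ 0 hσ hε hν₀, sum_mul_add_const_sub_self hν, hR2, sqrt_sq hR.le,
      sub_zero, add_zero, neg_div, sq, mul_div_mul_right R σ hR.ne', add_self_div_two]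
  rcases eq_or_ne w 0 with rfl | hw
  · rw [advRisk_gmix_zero _ _ _ _ hε, hnat] at hle
    have hlt : Φ (-(R / σ)) < 1 / 2 :=
      cdf_gaussianReal_zero ▸ strictMono_cdf_gaussianReal (by simp [div_pos hR hσ])
    exact absurd hle (not_le.2 ((ENNReal.ofReal_lt_iff_lt_toReal (cdf_nonneg _ _) (by simp)).2
      (by simpa using hlt)))
  set r := √(∑ i, w i ^ 2)
  set M := ∑ i, w i * (ν i + ε) - ε * ∑ i, |w i|
  have hr : 0 < r := sqrt_sum_sq_pos hw
  have hM : M ≤ r * R := (sum_mul_add_const_sub_le w ν hε).trans (sum_mul_le_sqrt_mul_sqrt _ _ _)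
  have e₁ : (-M - b) / (σ * r) = -(M / (σ * r)) - b / (σ * r) := by ring
  have e₂ : (-M + b) / (σ * r) = -(M / (σ * r)) + b / (σ * r) := by ring
  rw [advRisk_gmix_of_ne_zero _ b hσ hε hw, hnat, e₁, e₂,
    ENNReal.ofReal_le_ofReal_iff (cdf_nonneg _ _)] at hle
  have hMa : M / (σ * r) ≤ R / σ := by
    rw [div_le_div_iff₀ (by positivity) hσ]
    nlinarith
  obtain ⟨hMa, hβ⟩ := eq_and_eq_zero_of_cdf_add_cdf_le (div_pos hR hσ) hMa hle
  have hMeq : M = r * R := by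
    field_simp at hMa
    linarith
  obtain ⟨c, hc, rfl⟩ :=
    exists_pos_smul_of_sqrt_mul_sqrt_le hw hν₀ (hMeq ▸ sum_mul_add_const_sub_le w ν hε)
  exact ⟨c, hc, rfl, by simpa [hσ.ne', hr.ne'] using hβ⟩

/-- On the hypocritically perturbed mixture T_hyp (means (1+ε, η+ε, ..., η+ε)), any linear
classifier minimizing the ℓ∞ adversarial 0-1 risk with defense budget ε has all weights
positive and is equivalent to the natural classifier sign(x_1 + η ∑_{i≥2} x_i). -/
theorem minimizer_on_Thyp_is_natural (d : ℕ) (η σ ε : ℝ)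
    (hη : 0 < η) (hσ : 0 < σ) (hε : 0 < ε)
    (w : Fin (d + 1) → ℝ) (b : ℝ)
    (hmin : ∀ (w' : Fin (d + 1) → ℝ) (b' : ℝ),
      advRisk d (gmix d (fun i => if i = 0 then 1 + ε else η + ε) σ) w b ε
        ≤ advRisk d (gmix d (fun i => if i = 0 then 1 + ε else η + ε) σ) w' b' ε) :
    (∀ i : Fin (d + 1), 0 < w i) ∧
      ∃ c : ℝ, 0 < c ∧ (∀ i : Fin (d + 1), w i = c * (if i = 0 then 1 else η)) ∧ b = 0 := by
  set ν : Fin (d + 1) → ℝ := fun i => if i = 0 then 1 else η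
  have hν (i : Fin (d + 1)) : 0 < ν i := by
    simp only [ν]
    split_ifs
    exacts [one_pos, hη]
  have hμ : (fun i : Fin (d + 1) => if i = 0 then 1 + ε else η + ε) = fun i => ν i + ε := by
    ext i
    simp only [ν]
    split_ifs <;> rfl
  rw [hμ] at hmin
  obtain ⟨c, hc, rfl, rfl⟩ := exists_pos_smul_and_eq_zero_of_advRisk_le (fun i => (hν i).le)
    (fun h => (hν 0).ne' (congrFun h 0)) hσ hε.le (hmin ν 0)
  exact ⟨fun i => mul_pos hc (hν i), c, hc, fun i => rfl, rfl⟩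
end
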